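/- arXiv:1701.06259 — 2 statements merged into one kernel-verified Lean document; each statement's English description precedes it below -/
import Mathlib

section
/- Let a, c be real numbers of the same sign (a·c > 0), τ a nonzero complex number, and γ the positive square root of c/a. Let q(z) = a·(Re(τ·z))² + c·(Im(τ·z))², and suppose t ∈ ℝ and w ∈ ℂ satisfy q(z) = t·|z|² + Re(conj(w)·z²) for all z ∈ ℂ. Then t ≠ 0 and Ω(w/t) = ((1 − γ)/(1 + γ))·(conj(τ)/τ); that is, the Poincaré invariant of the definite form q = m_τ* q_{a,c} equals ((1 − γ)/(1 + γ))·(conj(τ)/τ). -/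
/-- The standard isomorphism from the Klein model to the Poincaré model of the
hyperbolic plane on the open unit disc: `Ω(μ) = μ / (1 + √(1 − |μ|²))`. -/
noncomputable def Omega (μ : ℂ) : ℂ :=
  μ / ((1 : ℂ) + (Real.sqrt (1 - ‖μ‖ ^ 2) : ℂ))

/-!
Since `Re(τz)² = (|τz|² + Re((τz)²))/2` and `Im(τz)² = (|τz|² − Re((τz)²))/2`, the form
`m_τ* q_{a,c}` has coefficients `t = (a+c)/2·|τ|²` and `w = (a−c)/2·conj(τ)²`, which are
unique. Hence `w/t = k·conj(τ)/τ` with `k = (a−c)/(a+c) = (1−γ²)/(1+γ²)`. The map `Ω`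
commutes with rotations, and on the real point `k` it gives `(1−γ)/(1+γ)`, because
`√(1−k²) = 2γ/(1+γ²)`.
-/

open ComplexConjugate

noncomputable def quadFormOfCoeffs (t : ℝ) (w z : ℂ) : ℝ :=
  t * ‖z‖ ^ 2 + (conj w * z ^ 2).re

theorem quadFormOfCoeffs_injective {t t' : ℝ} {w w' : ℂ}
    (h : ∀ z, quadFormOfCoeffs t w z = quadFormOfCoeffs t' w' z) : t = t' ∧ w = w' := by
  have h1 := h 1
  have hI := h Complex.I
  have h1I := h (1 + Complex.I)
  simp only [quadFormOfCoeffs, Complex.sq_norm, Complex.normSq_apply] at h1 hI h1I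
  norm_num [sq] at h1 hI h1I
  refine ⟨by linarith, Complex.ext (by linarith) (by linarith)⟩

theorem diagonal_pullback_eq_quadFormOfCoeffs (a c : ℝ) (τ z : ℂ) :
    a * (τ * z).re ^ 2 + c * (τ * z).im ^ 2 =
      quadFormOfCoeffs ((a + c) / 2 * ‖τ‖ ^ 2) (((a - c) / 2 : ℝ) * conj τ ^ 2) z := by
  simp only [quadFormOfCoeffs, Complex.sq_norm, Complex.normSq_apply]
  simp only [map_mul, Complex.conj_ofReal, Complex.conj_conj, Complex.mul_re, Complex.mul_im,
    Complex.ofReal_re, Complex.ofReal_im, sq]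
  ring

theorem diagonal_pullback_klein_point (a c : ℝ) {τ : ℂ} (hτ : τ ≠ 0) :
    (((a - c) / 2 : ℝ) * conj τ ^ 2) / ((((a + c) / 2 * ‖τ‖ ^ 2 : ℝ)) : ℂ) =
      ((a - c) / (a + c) : ℝ) * (conj τ / τ) := by
  have hconj : conj τ ≠ 0 := (map_ne_zero _).mpr hτ
  push_cast
  rw [← Complex.mul_conj']
  field_simp

theorem Omega_mul_of_norm_eq_one {u : ℂ} (hu : ‖u‖ = 1) (μ : ℂ) :
    Omega (u * μ) = u * Omega μ := by
  rw [Omega, Omega, norm_mul, hu, one_mul, mul_div_assoc]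

theorem Omega_ofReal (r : ℝ) : Omega r = ((r / (1 + √(1 - r ^ 2)) : ℝ) : ℂ) := by
  rw [Omega, Complex.norm_real, Real.norm_eq_abs, sq_abs]
  push_cast
  rfl

theorem Omega_one_sub_sq_div_one_add_sq {γ : ℝ} (hγ : 0 ≤ γ) :
    Omega ((1 - γ ^ 2) / (1 + γ ^ 2) : ℝ) = ((1 - γ) / (1 + γ) : ℝ) := by
  have hsq : 1 - ((1 - γ ^ 2) / (1 + γ ^ 2)) ^ 2 = (2 * γ / (1 + γ ^ 2)) ^ 2 := by
    field_simp
    ring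
  rw [Omega_ofReal, hsq, Real.sqrt_sq (by positivity)]
  congr 1
  field_simp
  ring

theorem sub_div_add_eq_of_mul_pos {a c : ℝ} (hac : 0 < a * c) :
    (a - c) / (a + c) = (1 - √(c / a) ^ 2) / (1 + √(c / a) ^ 2) := by
  have ha : a ≠ 0 := left_ne_zero_of_mul hac.ne'
  have hca : 0 ≤ c / a := by
    rw [show c / a = a * c / a ^ 2 by field_simp]
    positivity
  rw [Real.sq_sqrt hca]
  field_simp

/-- The Poincaré invariant of the definite form `q = m_τ* q_{a,c}` (with `a,c` of the
same sign, `τ ≠ 0`, and `γ = √(c/a)`) equals `((1 − γ)/(1 + γ))·(conj(τ)/τ)`. -/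
theorem poincare_invariant_of_diagonal_pullback (a c : ℝ) (hac : 0 < a * c)
    (τ : ℂ) (hτ : τ ≠ 0) (γ : ℝ) (hγ : γ = Real.sqrt (c / a))
    (t : ℝ) (w : ℂ)
    (hrep : ∀ z : ℂ, a * (τ * z).re ^ 2 + c * (τ * z).im ^ 2
        = t * ‖z‖ ^ 2 + ((starRingEnd ℂ) w * z ^ 2).re) :
    t ≠ 0 ∧
    Omega (w / (t : ℂ)) = (((1 - γ) / (1 + γ) : ℝ) : ℂ) * ((starRingEnd ℂ) τ / τ) := by
  obtain ⟨rfl, rfl⟩ := quadFormOfCoeffs_injective fun z =>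
    (hrep z).symm.trans (diagonal_pullback_eq_quadFormOfCoeffs a c τ z)
  have hsum : a + c ≠ 0 := fun h => by
    rw [eq_neg_of_add_eq_zero_right h] at hac
    nlinarith [sq_nonneg a]
  refine ⟨mul_ne_zero (by simpa using hsum) (by simpa using hτ), ?_⟩
  have hu : ‖conj τ / τ‖ = 1 := by
    rw [norm_div, Complex.norm_conj, div_self (norm_ne_zero_iff.mpr hτ)]
  rw [diagonal_pullback_klein_point a c hτ, mul_comm, Omega_mul_of_norm_eq_one hu,
    sub_div_add_eq_of_mul_pos hac, ← hγ,
    Omega_one_sub_sq_div_one_add_sq (hγ ▸ Real.sqrt_nonneg _), mul_comm]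
end

section
/- Let V and W be complex vector spaces of complex dimension 1, T : V → W a bijective real-linear map, v ∈ V nonzero, and w, w' ∈ W nonzero. Consider the real-linear maps S = f_w ∘ T ∘ f_v⁻¹ and S' = f_{w'} ∘ T ∘ f_v⁻¹ from ℂ to ℂ. If S_z ≠ 0, then S'_z ≠ 0 and μ_{S'} = μ_S; that is, the complex dilatation π_T(v, w) of f_w ∘ T ∘ f_v⁻¹ does not depend on the choice of the nonzero vector w ∈ W. -/
/-!
A complex-linear functional on a complex line is determined by its value at one nonzero vector, so
`f_{w'} = c • f_w` with `c = f_{w'}(w) ≠ 0`. Hence `S' = c • S`, both Wirtinger derivatives of `S`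
get multiplied by `c`, and `c` cancels in their quotient.
-/

open Complex

lemma LinearMap.eq_apply_smul_of_finrank_eq_one {K W : Type*} [Field K] [AddCommGroup W]
    [Module K W] (hW : Module.finrank K W = 1) {f : W →ₗ[K] K} {w : W} (hfw : f w = 1)
    (g : W →ₗ[K] K) : g = g w • f := by
  have hw : w ≠ 0 := by rintro rfl; simp at hfw
  ext x
  obtain ⟨a, rfl⟩ := exists_smul_eq_of_finrank_eq_one hW hw x
  simp [hfw, mul_comm]

noncomputable def wirtingerZ (S : ℂ → ℂ) : ℂ := (S 1 - I * S I) / 2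

noncomputable def wirtingerZbar (S : ℂ → ℂ) : ℂ := (S 1 + I * S I) / 2

lemma wirtingerZ_const_mul (c : ℂ) (S : ℂ → ℂ) :
    wirtingerZ (fun z ↦ c * S z) = c * wirtingerZ S := by
  unfold wirtingerZ; ring

lemma wirtingerZbar_const_mul (c : ℂ) (S : ℂ → ℂ) :
    wirtingerZbar (fun z ↦ c * S z) = c * wirtingerZbar S := by
  unfold wirtingerZbar; ring

lemma wirtingerZ_const_mul_ne_zero {c : ℂ} (hc : c ≠ 0) {S : ℂ → ℂ} (hS : wirtingerZ S ≠ 0) :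
    wirtingerZ (fun z ↦ c * S z) ≠ 0 := by
  rw [wirtingerZ_const_mul]; exact mul_ne_zero hc hS

lemma wirtingerZbar_div_wirtingerZ_const_mul {c : ℂ} (hc : c ≠ 0) (S : ℂ → ℂ) :
    wirtingerZbar (fun z ↦ c * S z) / wirtingerZ (fun z ↦ c * S z) =
      wirtingerZbar S / wirtingerZ S := by
  rw [wirtingerZ_const_mul, wirtingerZbar_const_mul, mul_div_mul_left _ _ hc]

theorem dilatation_independent_of_target_vector_general
    {V W : Type*} [AddCommGroup V] [Module ℝ V] [Module ℂ V]
    [AddCommGroup W] [Module ℝ W] [Module ℂ W]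
    (hdW : Module.finrank ℂ W = 1)
    (T : V →ₗ[ℝ] W)
    (w w' : W)
    (fv : V ≃ₗ[ℂ] ℂ)
    (fw fw' : W →ₗ[ℂ] ℂ) (hfw : fw w = 1) (hfw' : fw' w' = 1)
    (Sz Szb S'z S'zb : ℂ)
    (hSz : Sz = (fw (T (fv.symm 1)) - Complex.I * fw (T (fv.symm Complex.I))) / 2)
    (hSzb : Szb = (fw (T (fv.symm 1)) + Complex.I * fw (T (fv.symm Complex.I))) / 2)
    (hS'z : S'z = (fw' (T (fv.symm 1)) - Complex.I * fw' (T (fv.symm Complex.I))) / 2)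
    (hS'zb : S'zb = (fw' (T (fv.symm 1)) + Complex.I * fw' (T (fv.symm Complex.I))) / 2)
    (hSz0 : Sz ≠ 0) :
    S'z ≠ 0 ∧ S'zb / S'z = Szb / Sz := by
  set c := fw' w
  have hfw'_eq : ∀ x, fw' x = c * fw x := fun x ↦ by
    simpa using LinearMap.congr_fun (LinearMap.eq_apply_smul_of_finrank_eq_one hdW hfw fw') x
  have hc : c ≠ 0 := left_ne_zero_of_mul_eq_one ((hfw'_eq w').symm.trans hfw')
  set S : ℂ → ℂ := fun z ↦ fw (T (fv.symm z))
  have hS' : (fun z ↦ fw' (T (fv.symm z))) = fun z ↦ c * S z := funext fun z ↦ hfw'_eq _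
  replace hSz : Sz = wirtingerZ S := hSz
  replace hSzb : Szb = wirtingerZbar S := hSzb
  replace hS'z : S'z = wirtingerZ (fun z ↦ c * S z) := hS' ▸ hS'z
  replace hS'zb : S'zb = wirtingerZbar (fun z ↦ c * S z) := hS' ▸ hS'zb
  subst hSz hSzb hS'z hS'zb
  exact ⟨wirtingerZ_const_mul_ne_zero hc hSz0, wirtingerZbar_div_wirtingerZ_const_mul hc S⟩

/-- For a bijective real-linear map `T : V → W` between 1-dimensional complex vector
spaces, the complex dilatation `π_T(v, w)` of `S = f_w ∘ T ∘ f_v⁻¹ : ℂ → ℂ` does not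
depend on the choice of the nonzero vector `w ∈ W`. -/
theorem dilatation_independent_of_target_vector
    {V W : Type*} [AddCommGroup V] [Module ℝ V] [Module ℂ V] [IsScalarTower ℝ ℂ V]
    [AddCommGroup W] [Module ℝ W] [Module ℂ W] [IsScalarTower ℝ ℂ W]
    (hdV : Module.finrank ℂ V = 1) (hdW : Module.finrank ℂ W = 1)
    (T : V →ₗ[ℝ] W) (hT : Function.Bijective T)
    (v : V) (hv : v ≠ 0) (w w' : W) (hw : w ≠ 0) (hw' : w' ≠ 0)
    (fv : V ≃ₗ[ℂ] ℂ) (hfv : fv v = 1)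
    (fw fw' : W →ₗ[ℂ] ℂ) (hfw : fw w = 1) (hfw' : fw' w' = 1)
    (Sz Szb S'z S'zb : ℂ)
    (hSz : Sz = (fw (T (fv.symm 1)) - Complex.I * fw (T (fv.symm Complex.I))) / 2)
    (hSzb : Szb = (fw (T (fv.symm 1)) + Complex.I * fw (T (fv.symm Complex.I))) / 2)
    (hS'z : S'z = (fw' (T (fv.symm 1)) - Complex.I * fw' (T (fv.symm Complex.I))) / 2)
    (hS'zb : S'zb = (fw' (T (fv.symm 1)) + Complex.I * fw' (T (fv.symm Complex.I))) / 2)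
    (hSz0 : Sz ≠ 0) :
    S'z ≠ 0 ∧ S'zb / S'z = Szb / Sz :=
  dilatation_independent_of_target_vector_general hdW T w w' fv fw fw' hfw hfw' Sz Szb S'z S'zb hSz
    hSzb hS'z hS'zb hSz0
end
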